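/- Let θ ∈ ℤ be such that for every nonzero f : ZMod N → ℂ, ‖f‖₀ + ‖f̂‖₀ ≥ N − θ. Let k, k̂ ∈ ℕ and let g : ZMod N → ℂ be a generator such that for every ℓ ∈ ZMod N, θ + 2k + 1 ≤ #{p ∈ ZMod N : ⟨g, Π_{(p,ℓ)} g⟩ ≠ 0} ≤ k̂ (as integers). Let A, B be finite subsets of ZMod N with |A| ≥ θ + (2k)² − 2k + 2 and |B| ≥ θ + k̂ + 1 (as integers). Then the system {g_λ : λ ∈ A×B} allows phase retrieval for signals k-sparse in the Fourier basis: for all x, y ∈ C_{k,F}, if |⟨x, g_λ⟩| = |⟨y, g_λ⟩| for every λ ∈ A×B, then there exists c ∈ ℂ with |c| = 1 and x = c • y. -/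

import Mathlib

open Complex Finset

/-- `gw N m = ω^m` where `ω = exp(2πi/N)` and `m : ZMod N`. -/
noncomputable def gw (N : ℕ) (m : ZMod N) : ℂ :=
  Complex.exp (2 * Real.pi * Complex.I * (m.val : ℂ) / (N : ℂ))

/-- Translation operator `(T_p x)(n) = x(n-p)`. -/
def Tr (N : ℕ) (p : ZMod N) (x : ZMod N → ℂ) : ZMod N → ℂ :=
  fun n => x (n - p)

/-- Modulation operator `(M_ℓ x)(n) = ω^{ℓ·n} x(n)`. -/
noncomputable def Md (N : ℕ) (l : ZMod N) (x : ZMod N → ℂ) : ZMod N → ℂ :=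
  fun n => gw N (l * n) * x n

/-- Time-frequency shift `Π_{(p,ℓ)} = M_ℓ ∘ T_p`. -/
noncomputable def Pig (N : ℕ) (p l : ZMod N) (x : ZMod N → ℂ) : ZMod N → ℂ :=
  Md N l (Tr N p x)

/-- Inner product, conjugate linear in the first argument. -/
noncomputable def inn (N : ℕ) [NeZero N] (x y : ZMod N → ℂ) : ℂ :=
  ∑ j : ZMod N, (starRingEnd ℂ) (x j) * y j

/-- The discrete Fourier transform `x̂(j) = ∑_n x(n) ω^{-nj}`. -/
noncomputable def dft (N : ℕ) [NeZero N] (x : ZMod N → ℂ) : ZMod N → ℂ :=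
  fun j => ∑ n : ZMod N, x n * gw N (-(n * j))

/-- `x` is `k`-sparse in the Fourier basis: `x(n) = ∑_j z(j) ω^{nj}` for some
`z` with `‖z‖₀ ≤ k`. -/
noncomputable def FourierSparse (N : ℕ) [NeZero N] (k : ℕ) (x : ZMod N → ℂ) : Prop :=
  ∃ z : ZMod N → ℂ, Set.ncard {j | z j ≠ 0} ≤ k ∧
    ∀ n : ZMod N, x n = ∑ j : ZMod N, z j * gw N (n * j)

/-!
Let `z`, `w` be the Fourier coefficients of `x`, `y`, and `z_m(j) = z(j) conj(z(j - m))`.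
Expanding `|⟨x, Π_{(q,l)} g⟩|²` shows that its DFT in `q` at `m` is `N` times the DFT at `l` of
`p ↦ ⟨g, Π_{(p,m)} g⟩ ω^{-pm} ẑ_m(-p)`. The uncertainty principle is applied three times to the
difference of these quantities for `x` and `y`:
* for `l ∈ B`, the difference of the squared measurements vanishes on `A`, and its DFT is supported
  on the lags `m` with `z_m ≠ w_m`, which are differences of two points of `supp z ∪ supp w`, hence
  at most `(2k)² - 2k + 1` of them; so it vanishes everywhere;
* then, for each `m`, the function of `p` above built from `z_m - w_m` has DFT vanishing on `B` and
  at most `k̂` nonzero values, so it vanishes;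
* then the DFT of `z_m - w_m` vanishes on at least `θ + 2k + 1` points, while `z_m - w_m` has at
  most `2k` nonzero values, so `z_m = w_m`.
Hence `z(i) conj(z(j)) = w(i) conj(w(j))` for all `i, j`, which forces `z = c w` with `|c| = 1`.
-/

open ComplexConjugate
open scoped Pointwise
open ZMod (stdAddChar)

lemma ncard_ne_zero_add_ncard_le {α M : Type*} [Finite α] [Zero M] {f : α → M} {s : Set α}
    (h : ∀ a ∈ s, f a = 0) : {a | f a ≠ 0}.ncard + s.ncard ≤ Nat.card α := by
  have hsub : {a | f a ≠ 0} ⊆ sᶜ := fun a ha has => ha (h a has)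
  calc {a | f a ≠ 0}.ncard + s.ncard ≤ sᶜ.ncard + s.ncard :=
        Nat.add_le_add_right (Set.ncard_le_ncard hsub) _
    _ = Nat.card α := by rw [add_comm, Set.ncard_add_ncard_compl]

lemma Finset.card_sub_self_add_card_le {G : Type*} [AddGroup G] [DecidableEq G] (s : Finset G) :
    #(s - s) + #s ≤ #s ^ 2 + 1 := by
  have hsub : s - s ⊆ insert 0 (s.offDiag.image fun p => p.1 - p.2) := by
    intro a ha
    obtain ⟨b, hb, c, hc, rfl⟩ := mem_sub.mp ha
    by_cases hbc : b = c
    · simp [hbc]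
    · exact mem_insert_of_mem (mem_image.mpr ⟨(b, c), mem_offDiag.mpr ⟨hb, hc, hbc⟩, rfl⟩)
  have hcard := (card_le_card hsub).trans ((card_insert_le _ _).trans
    (Nat.add_le_add_right card_image_le 1))
  rw [offDiag_card] at hcard
  have := Nat.le_mul_self #s
  rw [sq]; omega

lemma exists_finset_of_ncard_support_le {α M : Type*} [Finite α] [Zero M] {z w : α → M}
    {k : ℕ} (hz : {j | z j ≠ 0}.ncard ≤ k) (hw : {j | w j ≠ 0}.ncard ≤ k) :
    ∃ U : Finset α, #U ≤ 2 * k ∧ (∀ j ∉ U, z j = 0) ∧ ∀ j ∉ U, w j = 0 := by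
  set S := {j | z j ≠ 0} ∪ {j | w j ≠ 0}
  refine ⟨(Set.toFinite S).toFinset, ?_, fun j hj => ?_, fun j hj => ?_⟩
  · rw [← Set.ncard_eq_toFinset_card S]
    exact (Set.ncard_union_le _ _).trans (by omega)
  all_goals simp_all [S]

def lagProduct {G : Type*} [AddGroup G] (z : G → ℂ) (m : G) : G → ℂ :=
  fun j => z j * conj (z (j - m))

section LagSupport

variable {G : Type*} [AddCommGroup G] {z w : G → ℂ}

lemma mem_of_lagProduct_sub_ne_zero {U : Finset G} (hz : ∀ j ∉ U, z j = 0)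
    (hw : ∀ j ∉ U, w j = 0) {m j : G} (h : (lagProduct z m - lagProduct w m) j ≠ 0) :
    j ∈ U ∧ j - m ∈ U := by
  by_contra hn
  rcases not_and_or.mp hn with hj | hj <;>
    simp [lagProduct, hz _ hj, hw _ hj] at h

lemma ncard_lagProduct_sub_ne_zero_le [Finite G] {k : ℕ} (hz : {j | z j ≠ 0}.ncard ≤ k)
    (hw : {j | w j ≠ 0}.ncard ≤ k) (m : G) :
    {j | (lagProduct z m - lagProduct w m) j ≠ 0}.ncard ≤ 2 * k := by
  obtain ⟨U, hU, hzU, hwU⟩ := exists_finset_of_ncard_support_le hz hw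
  refine (Set.ncard_le_ncard fun j hj => ?_).trans ((Set.ncard_coe_finset U).trans_le hU)
  exact (mem_of_lagProduct_sub_ne_zero hzU hwU hj).1

lemma ncard_lagProduct_ne_add_le [Finite G] [DecidableEq G] {k : ℕ}
    (hz : {j | z j ≠ 0}.ncard ≤ k) (hw : {j | w j ≠ 0}.ncard ≤ k) :
    {m | lagProduct z m ≠ lagProduct w m}.ncard + 2 * k ≤ (2 * k) ^ 2 + 1 := by
  obtain ⟨U, hU, hzU, hwU⟩ := exists_finset_of_ncard_support_le hz hw
  have hlags : {m | lagProduct z m ≠ lagProduct w m}.ncard ≤ #(U - U) := by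
    refine (Set.ncard_le_ncard fun m hm => ?_).trans (Set.ncard_coe_finset _).le
    obtain ⟨j, hj⟩ := Function.ne_iff.mp (sub_ne_zero.mpr hm)
    obtain ⟨hjU, hjmU⟩ := mem_of_lagProduct_sub_ne_zero hzU hwU hj
    exact mem_coe.mpr (mem_sub.mpr ⟨j, hjU, j - m, hjmU, sub_sub_cancel j m⟩)
  have hsub := card_sub_self_add_card_le U
  obtain ⟨d, hd⟩ := Nat.exists_eq_add_of_le hU
  rw [hd]
  nlinarith [Nat.le_mul_self d]

end LagSupport

lemma exists_norm_eq_one_smul_of_mul_conj_eq {ι : Type*} {z w : ι → ℂ}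
    (h : ∀ i j, z i * conj (z j) = w i * conj (w j)) :
    ∃ c : ℂ, ‖c‖ = 1 ∧ z = c • w := by
  by_cases hw : w = 0
  · refine ⟨1, norm_one, funext fun i => ?_⟩
    simpa [hw] using h i i
  obtain ⟨j, hj⟩ := Function.ne_iff.mp hw
  have hnorm : ‖z j‖ = ‖w j‖ := by
    have := h j j
    rw [mul_conj', mul_conj'] at this
    exact (sq_eq_sq₀ (norm_nonneg _) (norm_nonneg _)).mp (by exact_mod_cast this)
  refine ⟨z j / w j, by rw [norm_div, hnorm, div_self (norm_ne_zero_iff.mpr hj)],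
    funext fun i => ?_⟩
  have hcj : conj (w j) ≠ 0 := by simpa using hj
  rw [Pi.smul_apply, smul_eq_mul, div_mul_eq_mul_div, eq_div_iff hj]
  refine mul_left_cancel₀ hcj ?_
  linear_combination z j * h i j - z i * h j j

section Gabor

variable {N : ℕ} [NeZero N]

lemma gw_eq_stdAddChar (m : ZMod N) : gw N m = stdAddChar m := by
  rw [ZMod.stdAddChar_apply, ZMod.toCircle_apply]; rfl

lemma gw_add (a b : ZMod N) : gw N (a + b) = gw N a * gw N b := by
  simp only [gw_eq_stdAddChar, AddChar.map_add_eq_mul]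

lemma gw_neg (a : ZMod N) : gw N (-a) = conj (gw N a) := by
  simp only [gw_eq_stdAddChar, AddChar.map_neg_eq_conj]

lemma gw_ne_zero (a : ZMod N) : gw N a ≠ 0 := by
  simp [gw]

lemma sum_gw_mul (a : ZMod N) :
    ∑ n : ZMod N, gw N (n * a) = if a = 0 then (N : ℂ) else 0 := by
  simp only [gw_eq_stdAddChar, AddChar.sum_mulShift a (ZMod.isPrimitive_stdAddChar N), ZMod.card]
  split_ifs <;> simp

lemma dft_eq_zmod_dft (x : ZMod N → ℂ) : dft N x = ZMod.dft x := by
  ext j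
  unfold dft
  simp [ZMod.dft_apply, gw_eq_stdAddChar, mul_comm]

lemma dft_sub (x y : ZMod N → ℂ) : dft N (x - y) = dft N x - dft N y := by
  simp only [dft_eq_zmod_dft, map_sub]

lemma dft_zero : dft N (0 : ZMod N → ℂ) = 0 := by
  simp only [dft_eq_zmod_dft, map_zero]

lemma inn_Pig (x g : ZMod N → ℂ) (q l : ZMod N) :
    inn N x (Pig N q l g) = ∑ n, conj (x n) * gw N (l * n) * g (n - q) := by
  simp only [inn, Pig, Md, Tr]; congr! 1 with n; ring

lemma sum_sq_norm_correlation_mul_gw (u g : ZMod N → ℂ) (m : ZMod N) :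
    ∑ q, (‖∑ n, u n * g (n - q)‖ : ℂ) ^ 2 * gw N (-(q * m)) =
      ∑ p, inn N g (Pig N p m g) * ∑ n, conj (u n) * u (n - p) * gw N (-(n * m)) := by
  calc ∑ q, (‖∑ n, u n * g (n - q)‖ : ℂ) ^ 2 * gw N (-(q * m))
      = ∑ q, ∑ n, ∑ n', conj (u n) * conj (g (n - q)) * (u n' * g (n' - q)) *
          gw N (-(q * m)) := by
        simp_rw [← conj_mul', map_sum, sum_mul_sum, sum_mul, map_mul]
    _ = ∑ n, ∑ s, ∑ p, conj (g s) * gw N (m * s) * g (s - p) *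
          (conj (u n) * u (n - p) * gw N (-(n * m))) := by
        -- substitute `q = n - s` and `n' = n - p`
        rw [sum_comm]
        refine sum_congr rfl fun n _ => ?_
        rw [← (Equiv.subLeft n).sum_comp]
        refine sum_congr rfl fun s _ => ?_
        rw [← (Equiv.subLeft n).sum_comp]
        refine sum_congr rfl fun p _ => ?_
        simp only [Equiv.subLeft_apply]
        rw [show -((n - s) * m) = m * s + -(n * m) by ring, gw_add, sub_sub_cancel,
          show n - p - (n - s) = s - p by ring]
        ring
    _ = _ := by
        simp_rw [inn_Pig, sum_mul, mul_sum]
        exact sum_comm.trans ((sum_congr rfl fun s _ => sum_comm).trans sum_comm)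

lemma dft_sq_norm_inn_Pig (x g : ZMod N → ℂ) (l m : ZMod N) :
    dft N (fun q => (‖inn N x (Pig N q l g)‖ : ℂ) ^ 2) m =
      ∑ p, inn N g (Pig N p m g) * gw N (-(p * l)) *
        ∑ n, x n * conj (x (n - p)) * gw N (-(n * m)) := by
  simp only [dft, inn_Pig x g]
  refine (sum_sq_norm_correlation_mul_gw (fun n => conj (x n) * gw N (l * n)) g m).trans ?_
  refine sum_congr rfl fun p _ => ?_
  rw [mul_sum, mul_sum]
  refine sum_congr rfl fun n _ => ?_
  have hgw : gw N (-(l * n)) * gw N (l * (n - p)) = gw N (-(p * l)) := by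
    rw [← gw_add]; ring_nf
  simp only [map_mul, conj_conj, ← gw_neg]
  linear_combination inn N g (Pig N p m g) * x n * conj (x (n - p)) * gw N (-(n * m)) * hgw

lemma sum_mul_conj_sub_mul_gw {x z : ZMod N → ℂ} (hx : ∀ n, x n = ∑ j, z j * gw N (n * j))
    (p m : ZMod N) :
    ∑ n, x n * conj (x (n - p)) * gw N (-(n * m)) =
      N * gw N (-(p * m)) * dft N (lagProduct z m) (-p) := by
  calc ∑ n, x n * conj (x (n - p)) * gw N (-(n * m))
      = ∑ n, ∑ j, ∑ j', z j * conj (z j') * gw N (p * j') * gw N (n * (j - j' - m)) := by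
        refine sum_congr rfl fun n _ => ?_
        simp only [hx, map_sum, map_mul, ← gw_neg, sum_mul, mul_sum]
        rw [sum_comm]
        refine sum_congr rfl fun j _ => sum_congr rfl fun j' _ => ?_
        have hgw : gw N (n * j) * gw N (-((n - p) * j')) * gw N (-(n * m)) =
            gw N (p * j') * gw N (n * (j - j' - m)) := by
          simp only [← gw_add]; ring_nf
        linear_combination z j * conj (z j') * hgw
    _ = ∑ j, ∑ j', z j * conj (z j') * gw N (p * j') * ∑ n, gw N (n * (j - j' - m)) := by
        rw [sum_comm]
        simp_rw [mul_sum]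
        exact sum_congr rfl fun j _ => sum_comm
    _ = ∑ j, N * (z j * conj (z (j - m)) * gw N (p * (j - m))) := by
        refine sum_congr rfl fun j _ => ?_
        simp only [sum_gw_mul, sub_sub, sub_eq_zero, mul_ite, mul_zero, ← sub_eq_iff_eq_add,
          sum_ite_eq, mem_univ, if_true]
        ring
    _ = _ := by
        simp only [dft, lagProduct, mul_sum]
        refine sum_congr rfl fun j _ => ?_
        have hgw : gw N (-(p * m)) * gw N (-(j * -p)) = gw N (p * (j - m)) := by
          rw [← gw_add]; ring_nf
        linear_combination -(N * z j * conj (z (j - m)) * hgw)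

noncomputable def ambiguityProduct (g : ZMod N → ℂ) (m : ZMod N) (r : ZMod N → ℂ) :
    ZMod N → ℂ :=
  fun p => inn N g (Pig N p m g) * gw N (-(p * m)) * dft N r (-p)

lemma ambiguityProduct_sub (g : ZMod N → ℂ) (m : ZMod N) (r s : ZMod N → ℂ) :
    ambiguityProduct g m (r - s) = ambiguityProduct g m r - ambiguityProduct g m s := by
  ext p; simp only [ambiguityProduct, dft_sub, Pi.sub_apply]; ring

lemma ambiguityProduct_zero (g : ZMod N → ℂ) (m : ZMod N) : ambiguityProduct g m 0 = 0 := by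
  ext p; simp [ambiguityProduct, dft_zero]

lemma dft_sq_norm_inn_Pig_eq_dft {x z : ZMod N → ℂ}
    (hx : ∀ n, x n = ∑ j, z j * gw N (n * j)) (g : ZMod N → ℂ) (l m : ZMod N) :
    dft N (fun q => (‖inn N x (Pig N q l g)‖ : ℂ) ^ 2) m =
      N * dft N (ambiguityProduct g m (lagProduct z m)) l := by
  rw [dft_sq_norm_inn_Pig, dft, mul_sum]
  refine sum_congr rfl fun p _ => ?_
  rw [sum_mul_conj_sub_mul_gw hx, ambiguityProduct]
  ring

lemma dft_sq_norm_inn_Pig_sub_eq_dft {x y z w : ZMod N → ℂ}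
    (hx : ∀ n, x n = ∑ j, z j * gw N (n * j)) (hy : ∀ n, y n = ∑ j, w j * gw N (n * j))
    (g : ZMod N → ℂ) (l m : ZMod N) :
    dft N ((fun q => (‖inn N x (Pig N q l g)‖ : ℂ) ^ 2) -
        fun q => (‖inn N y (Pig N q l g)‖ : ℂ) ^ 2) m =
      N * dft N (ambiguityProduct g m (lagProduct z m - lagProduct w m)) l := by
  rw [dft_sub, Pi.sub_apply, dft_sq_norm_inn_Pig_eq_dft hx, dft_sq_norm_inn_Pig_eq_dft hy,
    ambiguityProduct_sub, dft_sub, Pi.sub_apply, mul_sub]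

def UncertaintyPrinciple (N : ℕ) [NeZero N] (θ : ℤ) : Prop :=
  ∀ f : ZMod N → ℂ, f ≠ 0 →
    (N : ℤ) - θ ≤ (Set.ncard {n | f n ≠ 0} : ℤ) + (Set.ncard {j | dft N f j ≠ 0} : ℤ)

lemma UncertaintyPrinciple.eq_zero {θ : ℤ} (hUP : UncertaintyPrinciple N θ) {f : ZMod N → ℂ}
    (hf : (Set.ncard {n | f n ≠ 0} : ℤ) + (Set.ncard {j | dft N f j ≠ 0} : ℤ) < N - θ) :
    f = 0 :=
  by_contra fun hne => (hUP f hne).not_gt hf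

lemma norm_inn_Pig_eq_of_eqOn {θ : ℤ} (hUP : UncertaintyPrinciple N θ)
    {x y z w : ZMod N → ℂ} (hx : ∀ n, x n = ∑ j, z j * gw N (n * j))
    (hy : ∀ n, y n = ∑ j, w j * gw N (n * j))
    {A : Finset (ZMod N)} (hA : θ + {m | lagProduct z m ≠ lagProduct w m}.ncard < #A)
    (g : ZMod N → ℂ) {l : ZMod N}
    (hl : ∀ q ∈ A, ‖inn N x (Pig N q l g)‖ = ‖inn N y (Pig N q l g)‖) (q : ZMod N) :
    ‖inn N x (Pig N q l g)‖ = ‖inn N y (Pig N q l g)‖ := by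
  set f := (fun q => (‖inn N x (Pig N q l g)‖ : ℂ) ^ 2) -
    fun q => (‖inn N y (Pig N q l g)‖ : ℂ) ^ 2 with hf
  have hsupp : {n | f n ≠ 0}.ncard + #A ≤ N := by
    simpa [Nat.card_zmod] using ncard_ne_zero_add_ncard_le (s := (A : Set (ZMod N)))
      fun q hq => by simp [hf, hl q (mem_coe.mp hq)]
  have hdft : {m | dft N f m ≠ 0}.ncard ≤ {m | lagProduct z m ≠ lagProduct w m}.ncard := by
    refine Set.ncard_le_ncard fun m hm heq => hm ?_
    rw [hf, dft_sq_norm_inn_Pig_sub_eq_dft hx hy, heq, sub_self,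
      ambiguityProduct_zero, dft_zero, Pi.zero_apply, mul_zero]
  have hf0 : f = 0 := hUP.eq_zero (by omega)
  have hq := congrFun hf0 q
  simp only [hf, Pi.sub_apply, Pi.zero_apply, sub_eq_zero] at hq
  exact (sq_eq_sq₀ (norm_nonneg _) (norm_nonneg _)).mp (by exact_mod_cast hq)

lemma ambiguityProduct_lagProduct_sub_eq_zero {θ : ℤ} (hUP : UncertaintyPrinciple N θ)
    {x y z w : ZMod N → ℂ} (hx : ∀ n, x n = ∑ j, z j * gw N (n * j))
    (hy : ∀ n, y n = ∑ j, w j * gw N (n * j)) (g : ZMod N → ℂ) (m : ZMod N)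
    {B : Finset (ZMod N)} (hB : θ + {p | inn N g (Pig N p m g) ≠ 0}.ncard < #B)
    (hmeas : ∀ l ∈ B, ∀ q, ‖inn N x (Pig N q l g)‖ = ‖inn N y (Pig N q l g)‖) :
    ambiguityProduct g m (lagProduct z m - lagProduct w m) = 0 := by
  set c := ambiguityProduct g m (lagProduct z m - lagProduct w m) with hc
  have hsupp : {p | c p ≠ 0}.ncard ≤ {p | inn N g (Pig N p m g) ≠ 0}.ncard :=
    Set.ncard_le_ncard fun p hp hA => hp (by simp [hc, ambiguityProduct, hA])
  have hvanish : ∀ l ∈ B, dft N c l = 0 := by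
    intro l hl
    have hf : ((fun q => (‖inn N x (Pig N q l g)‖ : ℂ) ^ 2) -
        fun q => (‖inn N y (Pig N q l g)‖ : ℂ) ^ 2) = 0 :=
      funext fun q => by simp [hmeas l hl q]
    have h := dft_sq_norm_inn_Pig_sub_eq_dft hx hy g l m
    rw [hf, dft_zero, Pi.zero_apply] at h
    exact (mul_eq_zero.mp h.symm).resolve_left (Nat.cast_ne_zero.mpr (NeZero.ne N))
  have hdft : {l | dft N c l ≠ 0}.ncard + #B ≤ N := by
    simpa [Nat.card_zmod] using ncard_ne_zero_add_ncard_le (s := (B : Set (ZMod N)))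
      fun l hl => hvanish l (mem_coe.mp hl)
  exact hUP.eq_zero (by omega)

lemma eq_zero_of_ambiguityProduct_eq_zero {θ : ℤ} (hUP : UncertaintyPrinciple N θ)
    {g r : ZMod N → ℂ} {m : ZMod N}
    (hr : θ + {j | r j ≠ 0}.ncard < {p | inn N g (Pig N p m g) ≠ 0}.ncard)
    (h : ambiguityProduct g m r = 0) : r = 0 := by
  have hdft : {j | dft N r j ≠ 0}.ncard + {p | inn N g (Pig N p m g) ≠ 0}.ncard ≤ N := by
    rw [← Set.ncard_image_of_injective {p | inn N g (Pig N p m g) ≠ 0} neg_injective]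
    refine (ncard_ne_zero_add_ncard_le (f := dft N r) ?_).trans_eq (Nat.card_zmod N)
    rintro _ ⟨p, hp, rfl⟩
    simpa [ambiguityProduct, show inn N g (Pig N p m g) ≠ 0 from hp, gw_ne_zero] using
      congrFun h p
  exact hUP.eq_zero (by omega)

end Gabor

/-- Phase retrieval of Fourier-sparse signals from partial Gabor measurements:
under the uncertainty principle with constant `θ` and the condition
`θ + 2k + 1 ≤ ‖(⟨g, g_{·,ℓ}⟩)‖₀ ≤ k̂` for every `ℓ`, the measurements indexed
by `A × B` with `|A| ≥ θ + (2k)² - 2k + 2` and `|B| ≥ θ + k̂ + 1` allow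
`Fk`-sparse phase retrieval. -/
theorem Gabor_Fourier_sparse_phase_retrieval (N : ℕ) [NeZero N] (θ : ℤ) (k khat : ℕ)
    (g : ZMod N → ℂ)
    (hUP : ∀ f : ZMod N → ℂ, f ≠ 0 →
      (N : ℤ) - θ ≤ (Set.ncard {n | f n ≠ 0} : ℤ) + (Set.ncard {j | dft N f j ≠ 0} : ℤ))
    (hg : ∀ l : ZMod N,
      θ + 2 * (k : ℤ) + 1 ≤ (Set.ncard {p | inn N g (Pig N p l g) ≠ 0} : ℤ) ∧
      (Set.ncard {p | inn N g (Pig N p l g) ≠ 0} : ℤ) ≤ (khat : ℤ))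
    (A B : Finset (ZMod N))
    (hA : θ + (2 * (k : ℤ)) ^ 2 - 2 * (k : ℤ) + 2 ≤ (A.card : ℤ))
    (hB : θ + (khat : ℤ) + 1 ≤ (B.card : ℤ)) :
    ∀ x y : ZMod N → ℂ, FourierSparse N k x → FourierSparse N k y →
      (∀ q ∈ A, ∀ j ∈ B,
        ‖inn N x (Pig N q j g)‖ = ‖inn N y (Pig N q j g)‖) →
      ∃ c : ℂ, ‖c‖ = 1 ∧ x = c • y := by
  rintro x y ⟨z, hzk, hx⟩ ⟨w, hwk, hy⟩ hmeas
  have hlags := ncard_lagProduct_ne_add_le hzk hwk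
  have hfull : ∀ l ∈ B, ∀ q, ‖inn N x (Pig N q l g)‖ = ‖inn N y (Pig N q l g)‖ :=
    fun l hl => norm_inn_Pig_eq_of_eqOn hUP hx hy (by linarith) g
      fun q hq => hmeas q hq l hl
  have hlag : ∀ m, lagProduct z m = lagProduct w m := fun m => sub_eq_zero.mp <|
    eq_zero_of_ambiguityProduct_eq_zero hUP
      (by linarith [(hg m).1, ncard_lagProduct_sub_ne_zero_le hzk hwk m])
      (ambiguityProduct_lagProduct_sub_eq_zero hUP hx hy g m (by linarith [(hg m).2]) hfull)
  obtain ⟨c, hc, rfl⟩ := exists_norm_eq_one_smul_of_mul_conj_eq fun i j => by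
    simpa [lagProduct] using congrFun (hlag (i - j)) i
  refine ⟨c, hc, funext fun n => ?_⟩
  simp only [hx, hy, Pi.smul_apply, smul_eq_mul, mul_sum, mul_assoc]
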